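/- With b_n as in the k = 5 construction, for all n ≥ 1, 0 ≤ h ≤ 4, and 1 ≤ t ≤ F_n: b_{5(F_{n+1}−1)+hF_n+t+1} = 5F_{n+3} + hF_{n+2} − 3 + t + ⌊(F_{n+1}+1+t)φ⌋ − ⌊(F_{n+1}+1)φ⌋, where φ = (1+√5)/2. -/

import Mathlib

noncomputable def phi : ℝ := (1 + Real.sqrt 5) / 2

/-- The substitution σ: 1 ↦ (2), 2 ↦ (2,1). -/
def subst : ℕ → List ℕ
  | 1 => [2]
  | 2 => [2, 1]
  | _ => []

/-- `fibWord n` is the Fibonacci-substitution word `C_{n+1}` (so `fibWord 0 = C₁ = [1]`). -/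
def fibWord : ℕ → List ℕ
  | 0 => [1]
  | n + 1 => (fibWord n).flatMap subst

/-- `cseq k n` is the `n`-th term (1-indexed) of the concatenation
    `C₁^(k) ⊎ C₂^(k) ⊎ …` of `k`-fold repetitions of the Fibonacci-substitution words. -/
def cseq (k n : ℕ) : ℕ :=
  ((List.range n).flatMap fun i => (List.replicate k (fibWord i)).flatten).getD (n - 1) 0

/-- `aseq k n = (k+1) + Σ_{i=1}^{n-1} c_i`. -/
def aseq (k n : ℕ) : ℕ := (k + 1) + ∑ i ∈ Finset.Ico 1 n, cseq k i

/-- `bseq k n = (2k+2) + Σ_{i=1}^{n-1} (c_i + 1)`. -/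
def bseq (k n : ℕ) : ℕ := (2 * k + 2) + ∑ i ∈ Finset.Ico 1 n, (cseq k i + 1)

lemma fibWord_add_two (n : ℕ) : fibWord (n + 2) = fibWord (n + 1) ++ fibWord n := by
  induction n with
  | zero => rfl
  | succ n ih =>
    show (fibWord (n+2)).flatMap subst = (fibWord (n+1)).flatMap subst ++ fibWord (n+1)
    rw [ih, List.flatMap_append]
    rfl

lemma fibWord_length (n : ℕ) : (fibWord n).length = Nat.fib (n + 1) := by
  induction n using Nat.twoStepInduction with
  | zero => rfl
  | one => rfl
  | more n ih1 ih2 =>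
    rw [fibWord_add_two, List.length_append, ih1, ih2]
    have h : Nat.fib (n+2+1) = Nat.fib (n+1) + Nat.fib (n+1+1) := Nat.fib_add_two
    omega

lemma fibWord_sum (n : ℕ) : (fibWord n).sum = Nat.fib (n + 2) := by
  induction n using Nat.twoStepInduction with
  | zero => rfl
  | one => rfl
  | more n ih1 ih2 =>
    rw [fibWord_add_two, List.sum_append, ih1, ih2]
    have h : Nat.fib (n+2+2) = Nat.fib (n+2) + Nat.fib (n+1+2) := Nat.fib_add_two
    omega

/-- the block of 5 copies of `fibWord i` -/
def B (i : ℕ) : List ℕ := (List.replicate 5 (fibWord i)).flatten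

def W (n : ℕ) : List ℕ := (List.range n).flatMap fun i => B i

lemma B_length (i : ℕ) : (B i).length = 5 * Nat.fib (i + 1) := by
  simp [B, List.length_flatten, List.map_replicate, List.sum_replicate, fibWord_length,
    smul_eq_mul]
  ring

lemma B_sum (i : ℕ) : (B i).sum = 5 * Nat.fib (i + 2) := by
  simp [B, List.sum_flatten, List.map_replicate, List.sum_replicate, fibWord_sum, smul_eq_mul]
  ring

lemma W_succ (n : ℕ) : W (n + 1) = W n ++ B n := by
  simp [W, List.range_succ]

lemma W_length (n : ℕ) : (W n).length + 5 = 5 * Nat.fib (n + 2) := by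
  induction n with
  | zero => rfl
  | succ n ih =>
    rw [W_succ, List.length_append, B_length]
    have h : Nat.fib (n+1+2) = Nat.fib (n+1) + Nat.fib (n+2) := Nat.fib_add_two
    omega

lemma W_sum (n : ℕ) : (W n).sum + 10 = 5 * Nat.fib (n + 3) := by
  induction n with
  | zero => rfl
  | succ n ih =>
    rw [W_succ, List.sum_append, B_sum]
    have h : Nat.fib (n+1+3) = Nat.fib (n+2) + Nat.fib (n+3) := Nat.fib_add_two
    omega

lemma le_W_length (N : ℕ) : N ≤ (W N).length := by
  induction N with
  | zero => simp [W]
  | succ N ih =>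
    rw [W_succ, List.length_append, B_length]
    have : 0 < Nat.fib (N + 1) := Nat.fib_pos.mpr (by omega)
    omega

lemma lt_W_length {j N : ℕ} (h : j < N) : j < (W N).length :=
  lt_of_lt_of_le h (le_W_length N)

lemma W_prefix {a b : ℕ} (hab : a ≤ b) : ∃ r, W b = W a ++ r := by
  induction b with
  | zero => exact ⟨[], by simp [show a = 0 by omega]⟩
  | succ b ih =>
    rcases Nat.lt_or_ge a (b + 1) with hlt | hge
    · obtain ⟨r, hr⟩ := ih (by omega)
      exact ⟨r ++ B b, by rw [W_succ, hr, List.append_assoc]⟩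
    · exact ⟨[], by rw [show a = b + 1 by omega, List.append_nil]⟩

lemma W_getD_stable {j N M : ℕ} (h : j < N) (hNM : N ≤ M) :
    (W M).getD j 0 = (W N).getD j 0 := by
  obtain ⟨r, hr⟩ := W_prefix hNM
  rw [hr, List.getD_append _ _ _ _ (lt_W_length h)]

lemma cseq_getD {j N : ℕ} (h : j < N) : cseq 5 (j + 1) = (W N).getD j 0 := by
  show (W (j+1)).getD (j + 1 - 1) 0 = (W N).getD j 0
  simp only [Nat.add_sub_cancel]
  rw [W_getD_stable (Nat.lt_succ_self j) h]

lemma sum_cseq (M N : ℕ) (h : M ≤ N) :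
    ∑ j ∈ Finset.range M, cseq 5 (j + 1) = ((W N).take M).sum := by
  induction M with
  | zero => simp
  | succ M ih =>
    rw [Finset.sum_range_succ, ih (by omega), cseq_getD (by omega : M < N),
      List.sum_take_succ _ _ (lt_W_length (by omega : M < N)),
      List.getD_eq_getElem _ _ (lt_W_length (by omega : M < N))]

lemma take_rep_sum : ∀ (h : ℕ) (c : ℕ) (w : List ℕ) (t : ℕ), t ≤ w.length → h < c →
    (((List.replicate c w).flatten).take (h * w.length + t)).sum
      = h * w.sum + (w.take t).sum := by
  intro h
  induction h with
  | zero =>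
    intro c w t ht hc
    obtain ⟨c', rfl⟩ : ∃ c', c = c' + 1 := ⟨c - 1, by omega⟩
    rw [show List.replicate (c'+1) w = w :: List.replicate c' w from rfl]
    rw [List.flatten_cons, zero_mul, zero_add, List.take_append_of_le_length ht]
    omega
  | succ h ih =>
    intro c w t ht hc
    obtain ⟨c', rfl⟩ : ∃ c', c = c' + 1 := ⟨c - 1, by omega⟩
    rw [show List.replicate (c'+1) w = w :: List.replicate c' w from rfl, List.flatten_cons]
    rw [show (h+1) * w.length + t = w.length + (h * w.length + t) by ring,
      List.take_length_add_append, List.sum_append, ih c' w t ht (by omega)]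
    ring

/-- The main combinatorial reduction. -/
lemma bseq_reduce (n h t : ℕ) (hn : 1 ≤ n) (hh : h ≤ 4) (ht1 : 1 ≤ t) (ht2 : t ≤ Nat.fib n) :
    (bseq 5 (5 * (Nat.fib (n + 1) - 1) + h * Nat.fib n + t + 1) : ℤ) =
      5 * Nat.fib (n + 3) + h * Nat.fib (n + 2) - 3 + t
        + (((fibWord (n-1)).take t).sum : ℤ) := by
  obtain ⟨n', rfl⟩ : ∃ n', n = n' + 1 := ⟨n - 1, by omega⟩
  have hfpos : 1 ≤ Nat.fib (n' + 2) := Nat.fib_pos.mpr (by omega)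
  have hfpos1 : 1 ≤ Nat.fib (n' + 1) := Nat.fib_pos.mpr (by omega)
  have hd : h * Nat.fib (n' + 1) ≤ 4 * Nat.fib (n' + 1) := Nat.mul_le_mul_right _ hh
  set M : ℕ := 5 * (Nat.fib (n' + 2) - 1) + h * Nat.fib (n' + 1) + t with hM
  have hMW : M = (W n').length + (h * Nat.fib (n' + 1) + t) := by
    have := W_length n'
    omega
  have hsum : ∑ j ∈ Finset.range M, cseq 5 (j + 1)
      = (W n').sum + (h * (fibWord n').sum + ((fibWord n').take t).sum) := by
    rw [sum_cseq M (M + n' + 2) (by omega)]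
    obtain ⟨r, hr⟩ := W_prefix (show n' + 2 ≤ M + n' + 2 by omega)
    have hle : M ≤ (W (n' + 2)).length := by
      have h1 := W_length (n' + 2)
      have h2 : Nat.fib (n'+2+2) = Nat.fib (n'+2) + Nat.fib (n'+2+1) := Nat.fib_add_two
      have h3 : Nat.fib (n'+2+1) = Nat.fib (n'+1) + Nat.fib (n'+2) := Nat.fib_add_two
      omega
    rw [hr, List.take_append_of_le_length hle]
    rw [show W (n'+2) = W n' ++ B n' ++ B (n'+1) by rw [← W_succ, ← W_succ]]
    rw [List.append_assoc, hMW, List.take_length_add_append, List.sum_append]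
    congr 1
    have hrt : h * Nat.fib (n'+1) + t ≤ (B n').length := by
      rw [B_length]; omega
    rw [List.take_append_of_le_length hrt]
    have hkey := take_rep_sum h 5 (fibWord n') t (by rw [fibWord_length]; exact ht2) (by omega)
    rw [fibWord_length] at hkey
    rw [B, hkey]
  have hIco : ∑ i ∈ Finset.Ico 1 (M+1), cseq 5 i = ∑ j ∈ Finset.range M, cseq 5 (j+1) := by
    rw [Finset.sum_Ico_eq_sum_range]
    simp [add_comm]
  have hb : bseq 5 (M + 1) = 12 + M +
      ((W n').sum + (h * (fibWord n').sum + ((fibWord n').take t).sum)) := by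
    rw [bseq, Finset.sum_add_distrib, Finset.sum_const, Nat.card_Ico, hIco, hsum]
    simp only [smul_eq_mul]
    omega
  have hWs := W_sum n'
  have hfw : (fibWord n').sum = Nat.fib (n' + 2) := fibWord_sum n'
  have hf4 : Nat.fib (n'+4) = Nat.fib (n'+2) + Nat.fib (n'+3) := Nat.fib_add_two
  have hf3 : Nat.fib (n'+3) = Nat.fib (n'+1) + Nat.fib (n'+2) := Nat.fib_add_two
  have hh3 : h * Nat.fib (n'+3) = h * Nat.fib (n'+1) + h * Nat.fib (n'+2) := by
    rw [hf3]; ring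
  rw [hfw] at hb
  have hNat : bseq 5 (M + 1) + 3
      = 5 * Nat.fib (n'+4) + h * Nat.fib (n'+3) + t + ((fibWord n').take t).sum := by
    omega
  simp only [show n'+1+3 = n'+4 from rfl, show n'+1+2 = n'+3 from rfl,
    show n'+1+1 = n'+2 from rfl, Nat.add_sub_cancel]
  rw [show (5 * (Nat.fib (n' + 2) - 1) + h * Nat.fib (n' + 1) + t + 1) = M + 1 from rfl]
  omega

noncomputable def psi : ℝ := (1 - Real.sqrt 5) / 2

lemma sqrt5_sq : Real.sqrt 5 ^ 2 = 5 := Real.sq_sqrt (by norm_num)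
lemma sqrt5_lb : (2.236 : ℝ) < Real.sqrt 5 := (Real.lt_sqrt (by norm_num)).mpr (by norm_num)
lemma sqrt5_ub : Real.sqrt 5 < 2.237 := (Real.sqrt_lt' (by norm_num)).mpr (by norm_num)

lemma psi_neg : psi < 0 := by unfold psi; nlinarith [sqrt5_lb]
lemma abs_psi : |psi| = (Real.sqrt 5 - 1) / 2 := by
  rw [abs_of_neg psi_neg, psi]; ring
lemma abs_psi_lt_one : |psi| < 1 := by rw [abs_psi]; nlinarith [sqrt5_ub]
lemma abs_psi_pos : 0 < |psi| := by rw [abs_psi]; nlinarith [sqrt5_lb]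
lemma psi_sq : psi ^ 2 = psi + 1 := by unfold psi; nlinarith [sqrt5_sq]

lemma abs_psi_pow_lt (n : ℕ) : |psi| ^ (n + 1) < |psi| ^ n :=
  pow_lt_pow_right_of_lt_one₀ abs_psi_pos abs_psi_lt_one (by omega)

lemma fib_phi (q : ℕ) : (Nat.fib q : ℝ) * phi = Nat.fib (q + 1) - psi ^ q := by
  induction q using Nat.twoStepInduction with
  | zero => simp
  | one => simp [phi, psi]; ring
  | more q ih1 ih2 =>
    simp only [show q+1+1 = q+2 from rfl] at ih2
    have h : (Nat.fib (q+2) : ℝ) = Nat.fib q + Nat.fib (q+1) := by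
      rw [Nat.fib_add_two]; push_cast; ring
    have h3 : (Nat.fib (q+3) : ℝ) = Nat.fib (q+1) + Nat.fib (q+2) := by
      rw [Nat.fib_add_two (n := q+1)]; push_cast; ring
    have hp : psi ^ (q+2) = psi ^ q * (psi + 1) := by rw [← psi_sq]; ring
    show (Nat.fib (q+2) : ℝ) * phi = (Nat.fib (q+3) : ℝ) - psi ^ (q+2)
    rw [h, h3, hp]
    linear_combination ih1 + ih2

lemma cassini (n : ℕ) :
    (Nat.fib n : ℤ) * Nat.fib (n + 2) - (Nat.fib (n + 1) : ℤ) ^ 2 = (-1) ^ (n + 1) := by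
  induction n with
  | zero => simp
  | succ n ih =>
    have h2 : (Nat.fib (n+2) : ℤ) = Nat.fib n + Nat.fib (n+1) := by
      rw [Nat.fib_add_two]; push_cast; ring
    have h3 : (Nat.fib (n+3) : ℤ) = Nat.fib (n+1) + Nat.fib (n+2) := by
      rw [Nat.fib_add_two (n := n+1)]; push_cast; ring
    show (Nat.fib (n+1) : ℤ) * Nat.fib (n+3) - (Nat.fib (n+2) : ℤ) ^ 2 = (-1) ^ (n+2)
    rw [h3]
    have he : (-1 : ℤ) ^ (n + 2) = -(-1) ^ (n+1) := by ring
    rw [he, ← ih, h2]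
    ring

lemma abs_le_abs_add {x y : ℝ} (h : 0 ≤ x * y) : |x| ≤ |x + y| := by
  nlinarith [sq_abs x, sq_abs (x+y), abs_nonneg x, abs_nonneg (x+y), sq_nonneg y, h]

lemma key (n m : ℕ) (hn : 1 ≤ n) (hm1 : 1 ≤ m) (hm2 : m < Nat.fib (n + 1)) (k : ℤ) :
    |psi| ^ (n + 1) < |(m : ℝ) * phi - k| := by
  set D : ℤ := (-1) ^ (n + 1) with hD
  have hDD : D * D = 1 := by
    rw [hD, ← pow_add]
    exact Even.neg_one_pow ⟨n+1, by ring⟩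
  set a : ℤ := D * (m * Nat.fib (n + 2) - k * Nat.fib (n + 1)) with ha
  set b : ℤ := D * (k * Nat.fib n - m * Nat.fib (n + 1)) with hb
  have hC := cassini n
  rw [← hD] at hC
  have hm : a * Nat.fib n + b * Nat.fib (n + 1) = m := by
    rw [ha, hb]
    linear_combination (D * (m:ℤ)) * hC + (m:ℤ) * hDD
  have hk : a * Nat.fib (n + 1) + b * Nat.fib (n + 2) = k := by
    rw [ha, hb]
    linear_combination (D * k) * hC + k * hDD
  have hmR : (a:ℝ) * Nat.fib n + (b:ℝ) * Nat.fib (n+1) = m := by exact_mod_cast hm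
  have hkR : (a:ℝ) * Nat.fib (n+1) + (b:ℝ) * Nat.fib (n+2) = k := by exact_mod_cast hk
  have f1 := fib_phi n
  have f2 := fib_phi (n+1)
  simp only [show n+1+1 = n+2 from rfl] at f2
  have hreal : (m:ℝ) * phi - k = -((a:ℝ) * psi ^ n + (b:ℝ) * psi ^ (n+1)) := by
    linear_combination (-phi) * hmR + (a:ℝ) * f1 + (b:ℝ) * f2 + hkR
  rw [hreal, abs_neg]
  clear_value D a b
  -- integer positivity facts
  have hfn : (1 : ℤ) ≤ Nat.fib n := by exact_mod_cast Nat.fib_pos.mpr hn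
  have hfn1 : (1 : ℤ) ≤ Nat.fib (n+1) := by exact_mod_cast Nat.fib_pos.mpr (by omega)
  have hmZ : (1 : ℤ) ≤ m := by exact_mod_cast hm1
  have hmZ2 : (m : ℤ) < Nat.fib (n+1) := by exact_mod_cast hm2
  have habs : ∀ c : ℤ, c ≠ 0 → (1:ℝ) ≤ |(c:ℝ)| := by
    intro c hc
    exact_mod_cast Int.one_le_abs hc
  have hlt := abs_psi_pow_lt n
  have hpow : |(psi:ℝ) ^ n| = |psi| ^ n := abs_pow psi n
  have hpow1 : |(psi:ℝ) ^ (n+1)| = |psi| ^ (n+1) := abs_pow psi (n+1)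
  have hne : a ≠ 0 ∨ (b ≠ 0 ∧ a = 0) := by
    by_cases hA : a = 0
    · right
      exact ⟨by intro hB; rw [hA, hB] at hm; simp at hm; omega, hA⟩
    · left; exact hA
  rcases hne with hA | ⟨hB, hA⟩
  · -- a ≠ 0
    rcases le_or_gt (a * b) 0 with hab | hab
    · -- opposite signs (or b = 0): |x + y| ≥ |x| ≥ |ψ|^n
      have hxy : 0 ≤ ((a:ℝ) * psi ^ n) * ((b:ℝ) * psi ^ (n+1)) := by
        have hodd : psi ^ n * psi ^ (n+1) < 0 := by
          rw [← pow_add]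
          exact Odd.pow_neg ⟨n, by ring⟩ psi_neg
        have habR : (a:ℝ) * b ≤ 0 := by exact_mod_cast hab
        nlinarith [habR, hodd]
      have h1 : |(a:ℝ) * psi ^ n| ≤ |(a:ℝ) * psi ^ n + (b:ℝ) * psi ^ (n+1)| :=
        abs_le_abs_add hxy
      have h2 : |psi| ^ n ≤ |(a:ℝ) * psi ^ n| := by
        rw [abs_mul, hpow]
        nlinarith [habs a hA, pow_pos abs_psi_pos n]
      linarith
    · -- same strict signs: contradiction with 1 ≤ m < fib (n+1)
      exfalso
      rcases lt_trichotomy a 0 with ha0 | ha0 | ha0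
      · have hb0 : b < 0 := by
          rcases lt_trichotomy b 0 with h' | h' | h'
          · exact h'
          · exfalso; rw [h'] at hab; simp at hab
          · exfalso; nlinarith
        have e1 : a * Nat.fib n ≤ -1 * Nat.fib n :=
          mul_le_mul_of_nonneg_right (by omega) (by omega)
        have e2 : b * Nat.fib (n+1) ≤ -1 * Nat.fib (n+1) :=
          mul_le_mul_of_nonneg_right (by omega) (by omega)
        linarith [hm, hmZ]
      · exact absurd ha0 hA
      · have hb0 : 0 < b := by
          rcases lt_trichotomy b 0 with h' | h' | h'
          · exfalso; nlinarith
          · exfalso; rw [h'] at hab; simp at hab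
          · exact h'
        have e1 : 1 * Nat.fib n ≤ a * Nat.fib n :=
          mul_le_mul_of_nonneg_right (by omega) (by omega)
        have e2 : 1 * Nat.fib (n+1) ≤ b * Nat.fib (n+1) :=
          mul_le_mul_of_nonneg_right (by omega) (by omega)
        linarith [hm, hmZ2]
  · -- a = 0, b ≠ 0 : impossible
    exfalso
    rw [hA] at hm
    simp only [zero_mul, zero_add] at hm
    have hb1 : 1 ≤ b := by
      rcases lt_trichotomy b 0 with h' | h' | h'
      · exfalso
        have e2 : b * Nat.fib (n+1) ≤ -1 * Nat.fib (n+1) :=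
          mul_le_mul_of_nonneg_right (by omega) (by omega)
        omega
      · omega
      · omega
    have e2 : 1 * Nat.fib (n+1) ≤ b * Nat.fib (n+1) :=
      mul_le_mul_of_nonneg_right (by omega) (by omega)
    omega

lemma floor_phi_eq {c : ℝ} {z : ℤ} (h1 : (z:ℝ) ≤ c * phi) (h2 : c * phi < z + 1) :
    ⌊c * phi⌋ = z := Int.floor_eq_iff.mpr ⟨h1, h2⟩

lemma floor_phi_1 : ⌊(1:ℝ) * phi⌋ = 1 :=
  floor_phi_eq (by unfold phi; push_cast; nlinarith [sqrt5_lb]) (by unfold phi; push_cast; nlinarith [sqrt5_ub])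
lemma floor_phi_2 : ⌊(2:ℝ) * phi⌋ = 3 :=
  floor_phi_eq (by unfold phi; push_cast; nlinarith [sqrt5_lb]) (by unfold phi; push_cast; nlinarith [sqrt5_ub])
lemma floor_phi_3 : ⌊(3:ℝ) * phi⌋ = 4 :=
  floor_phi_eq (by unfold phi; push_cast; nlinarith [sqrt5_lb]) (by unfold phi; push_cast; nlinarith [sqrt5_ub])
lemma floor_phi_4 : ⌊(4:ℝ) * phi⌋ = 6 :=
  floor_phi_eq (by unfold phi; push_cast; nlinarith [sqrt5_lb]) (by unfold phi; push_cast; nlinarith [sqrt5_ub])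
lemma floor_phi_6 : ⌊(6:ℝ) * phi⌋ = 9 :=
  floor_phi_eq (by unfold phi; push_cast; nlinarith [sqrt5_lb]) (by unfold phi; push_cast; nlinarith [sqrt5_ub])

lemma shift (n m : ℕ) (hn : 2 ≤ n) (hm1 : 1 ≤ m) (hm2 : m ≤ Nat.fib n + 1) :
    ⌊((Nat.fib (n+1) : ℝ) + m) * phi⌋ = (Nat.fib (n+2) : ℤ) + ⌊(m:ℝ) * phi⌋ := by
  rcases lt_or_ge m (Nat.fib (n+1)) with hlt | hge
  · set c := ⌊(m:ℝ) * phi⌋ with hc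
    have h0 : (c:ℝ) ≤ (m:ℝ) * phi := Int.floor_le _
    have h1 : (m:ℝ) * phi < c + 1 := Int.lt_floor_add_one _
    have k1 := key n m (by omega) hm1 hlt c
    have k2 := key n m (by omega) hm1 hlt (c + 1)
    rw [abs_of_nonneg (show (0:ℝ) ≤ (m:ℝ) * phi - c by linarith)] at k1
    push_cast at k2
    rw [abs_of_nonpos (show (m:ℝ) * phi - ((c:ℝ) + 1) ≤ 0 by linarith)] at k2
    have hfp := fib_phi (n+1)
    simp only [show n+1+1 = n+2 from rfl] at hfp
    have habs1 : psi ^ (n+1) ≤ |psi| ^ (n+1) := (abs_pow psi (n+1)) ▸ le_abs_self _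
    have habs2 : -(|psi| ^ (n+1)) ≤ psi ^ (n+1) := (abs_pow psi (n+1)) ▸ neg_abs_le _
    apply Int.floor_eq_iff.mpr
    constructor
    · push_cast
      nlinarith [k1, habs1, hfp]

    · push_cast
      nlinarith [k2, habs2, hfp]
  · -- special small cases: n = 2, m = 2 or n = 3, m = 3
    have hn3 : n ≤ 3 := by
      by_contra hcon
      have h4 : 2 ≤ Nat.fib (n - 1) := by
        calc 2 = Nat.fib 3 := by decide
        _ ≤ Nat.fib (n-1) := Nat.fib_mono (by omega)
      have hrec : Nat.fib (n+1) = Nat.fib (n-1) + Nat.fib n := by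
        rw [show n + 1 = (n-1) + 2 by omega, Nat.fib_add_two, show n-1+1 = n by omega]
      omega
    interval_cases n
    · have hm : m = 2 := by
        have e1 : Nat.fib (2+1) = 2 := by decide
        have e2 : Nat.fib 2 = 1 := by decide
        omega
      subst hm
      have e1 : Nat.fib (2+1) = 2 := by decide
      have e2 : Nat.fib (2+2) = 3 := by decide
      rw [e1, e2]
      rw [show ((2:ℕ):ℝ) = (2:ℝ) by norm_num, show ((2:ℝ) + 2) = 4 by norm_num,
        floor_phi_4, floor_phi_2]
      norm_num
    · have hm : m = 3 := by
        have e1 : Nat.fib (3+1) = 3 := by decide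
        have e2 : Nat.fib 3 = 2 := by decide
        omega
      subst hm
      have e1 : Nat.fib (3+1) = 3 := by decide
      have e2 : Nat.fib (3+2) = 5 := by decide
      rw [e1, e2]
      rw [show ((3:ℕ):ℝ) = (3:ℝ) by norm_num, show ((3:ℝ) + 3) = 6 by norm_num,
        floor_phi_6, floor_phi_3]
      norm_num

lemma wordSum : ∀ k, 1 ≤ k → ∀ t, 1 ≤ t → t ≤ Nat.fib (k+1) →
    ((((fibWord k).take t).sum : ℕ) : ℤ) = ⌊((t:ℝ) + 1) * phi⌋ - 1 := by
  intro k
  induction k using Nat.strong_induction_on with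
  | _ k ih =>
    obtain _ | _ | _ | k := k
    · intro hk
      exact absurd hk (by norm_num)
    · intro _ t ht1 ht2
      have e : Nat.fib (0+1+1) = 1 := by decide
      have ht : t = 1 := by omega
      subst ht
      have e2 : fibWord 1 = [2] := rfl
      rw [e2]
      rw [show (((1:ℕ):ℝ) + 1) = (2:ℝ) by norm_num, floor_phi_2]
      norm_num
    · intro _ t ht1 ht2
      have e : Nat.fib (0+1+1+1) = 2 := by decide
      have e2 : fibWord 2 = [2, 1] := rfl
      rw [e2]
      interval_cases t
      · rw [show (((1:ℕ):ℝ) + 1) = (2:ℝ) by norm_num, floor_phi_2]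
        norm_num
      · rw [show (((2:ℕ):ℝ) + 1) = (3:ℝ) by norm_num, floor_phi_3]
        norm_num
    · intro _ t ht1 ht2
      have ht2' : t ≤ Nat.fib (k+3+1) := ht2
      clear ht2
      rw [fibWord_add_two]
      have hlen : (fibWord (k+2)).length = Nat.fib (k+3) := fibWord_length _
      rcases le_or_gt t (Nat.fib (k+3)) with hc | hc
      · rw [List.take_append_of_le_length (by rw [hlen]; exact hc)]
        exact ih (k+2) (by omega) (by omega) t ht1 hc
      · have hf4 : Nat.fib (k+3+1) = Nat.fib (k+2) + Nat.fib (k+3) := Nat.fib_add_two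
        set r := t - Nat.fib (k+3) with hrdef
        have hr1 : 1 ≤ r := by omega
        have hr2 : r ≤ Nat.fib (k+2) := by omega
        rw [show (fibWord (k+2) ++ fibWord (k+1)).take t
            = fibWord (k+2) ++ (fibWord (k+1)).take r by
          rw [show t = (fibWord (k+2)).length + r by rw [hlen]; omega, List.take_length_add_append]]
        rw [List.sum_append, fibWord_sum]
        have ihr := ih (k+1) (by omega) (by omega) r hr1 (by
          rw [show k+1+1 = k+2 from rfl]; exact hr2)
        have hs := shift (k+2) (r+1) (by omega) (by omega) (by omega)
        push_cast at hs
        have harg : ((t:ℝ) + 1) = ((Nat.fib (k+2+1) : ℝ) + ((r:ℝ) + 1)) := by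
          have : (t:ℝ) = ((Nat.fib (k+3) : ℝ) + r) := by
            rw [show t = Nat.fib (k+3) + r by omega]
            push_cast
            ring
          rw [this, show k+2+1 = k+3 from rfl]
          ring
        rw [harg, hs]
        push_cast
        push_cast at ihr
        rw [show k+2+2 = k+3+1 from rfl, hf4]
        push_cast
        linarith [ihr]

theorem stmt14 (n h t : ℕ) (hn : 1 ≤ n) (hh : h ≤ 4) (ht1 : 1 ≤ t) (ht2 : t ≤ Nat.fib n) :
    (bseq 5 (5 * (Nat.fib (n + 1) - 1) + h * Nat.fib n + t + 1) : ℤ) =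
      5 * Nat.fib (n + 3) + h * Nat.fib (n + 2) - 3 + t +
        ⌊((Nat.fib (n + 1) : ℝ) + 1 + t) * phi⌋ - ⌊((Nat.fib (n + 1) : ℝ) + 1) * phi⌋ := by
  rw [bseq_reduce n h t hn hh ht1 ht2]
  have hS : (((fibWord (n-1)).take t).sum : ℤ)
      = ⌊((Nat.fib (n + 1) : ℝ) + 1 + t) * phi⌋ - ⌊((Nat.fib (n + 1) : ℝ) + 1) * phi⌋ := by
    rcases eq_or_lt_of_le hn with h1 | h2
    · -- n = 1
      have hn1 : n = 1 := h1.symm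
      subst hn1
      have ht : t = 1 := by
        have e : Nat.fib 1 = 1 := by decide
        omega
      subst ht
      have e2 : Nat.fib (1+1) = 1 := by decide
      have e0 : fibWord (1-1) = [1] := rfl
      rw [e0, e2]
      norm_num
      rw [floor_phi_3, floor_phi_2]
      norm_num
    · -- n ≥ 2
      have hn2 : 2 ≤ n := h2
      have hw := wordSum (n-1) (by omega) t ht1 (by
        rw [show n-1+1 = n by omega]; exact ht2)
      have hs1 := shift n (t+1) hn2 (by omega) (by omega)
      have hs2 := shift n 1 hn2 (by omega) (by omega)
      push_cast at hs1 hs2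
      rw [show ((Nat.fib (n + 1) : ℝ) + 1 + t) = ((Nat.fib (n+1) : ℝ) + ((t:ℝ) + 1)) by ring,
        hs1]
      rw [show ((Nat.fib (n + 1) : ℝ) + 1) = ((Nat.fib (n+1) : ℝ) + (1:ℝ)) by ring, hs2,
        floor_phi_1]
      omega
  omega
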